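/- arXiv:2603.07802 — 9 statements merged into one kernel-verified Lean document; each statement's English description precedes it below -/
import Mathlib

section
/- Let K be a differential ring with derivation D, let f be a unit of K, and set u := f⁻¹ * D(f). Then for every natural number m, the noncommutative Bell polynomial satisfies P_m(u) = f⁻¹ * D^m(f). -/
/-- Noncommutative Bell polynomials: `P 0 = 1`, `P (m+1) = D (P m) + u * P m`. -/
def bellP {K : Type*} [Ring K] (D : K → K) (u : K) : ℕ → K
  | 0 => 1
  | m + 1 => D (bellP D u m) + u * bellP D u m

/-! `P_m(u)` is the `m`-th iterate of `L := D + u ·` applied to `1`. By the Leibniz rule,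
left multiplication by `f⁻¹` intertwines `D` with `L` when `u = f⁻¹ D f`, so
`L^m 1 = L^m (f⁻¹ f) = f⁻¹ D^m f`. -/

section Leibniz

variable {K : Type*} [Ring K] {D : K → K}

theorem bellP_eq_iterate (u : K) (m : ℕ) :
    bellP D u m = (fun y => D y + u * y)^[m] 1 := by
  induction m with
  | zero => rfl
  | succ n ih => rw [bellP, ih, Function.iterate_succ_apply']

variable (hmul : ∀ a b : K, D (a * b) = D a * b + a * D b)
include hmul

theorem map_one_eq_zero_of_leibniz : D 1 = 0 := by
  simpa using hmul 1 1

theorem map_units_inv_of_leibniz (f : Kˣ) :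
    D (↑f⁻¹ : K) = -((↑f⁻¹ : K) * D f * ↑f⁻¹) := by
  have h : D (↑f⁻¹ : K) * f = -((↑f⁻¹ : K) * D f) := by
    have := hmul (↑f⁻¹ : K) f
    rw [Units.inv_mul, map_one_eq_zero_of_leibniz hmul] at this
    exact eq_neg_of_add_eq_zero_left this.symm
  calc D (↑f⁻¹ : K) = D (↑f⁻¹ : K) * f * ↑f⁻¹ := by rw [mul_assoc, Units.mul_inv, mul_one]
    _ = -((↑f⁻¹ : K) * D f * ↑f⁻¹) := by rw [h, neg_mul]

theorem semiconj_units_inv_mul_of_leibniz (f : Kˣ) :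
    Function.Semiconj ((↑f⁻¹ : K) * ·) D (fun y => D y + (↑f⁻¹ : K) * D f * y) := by
  intro x
  simp only [hmul, map_units_inv_of_leibniz hmul]
  noncomm_ring

end Leibniz

theorem bellP_eq_conj_iterate_general {K : Type*} [Ring K] (D : K → K)
    (hmul : ∀ a b : K, D (a * b) = D a * b + a * D b)
    (f : Kˣ) (u : K) (hu : u = (↑f⁻¹ : K) * D (f : K)) :
    ∀ m : ℕ, bellP D u m = (↑f⁻¹ : K) * D^[m] (f : K) := by
  intro m
  rw [bellP_eq_iterate, ← Units.inv_mul f, hu]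
  exact ((semiconj_units_inv_mul_of_leibniz hmul f).iterate_right m (f : K)).symm

/-- if `u = f⁻¹ * D f` for a unit `f`, then `P m (u) = f⁻¹ * D^[m] f`. -/
theorem bellP_eq_conj_iterate {K : Type*} [Ring K] (D : K → K)
    (hadd : ∀ a b : K, D (a + b) = D a + D b)
    (hmul : ∀ a b : K, D (a * b) = D a * b + a * D b)
    (f : Kˣ) (u : K) (hu : u = (↑f⁻¹ : K) * D (f : K)) :
    ∀ m : ℕ, bellP D u m = (↑f⁻¹ : K) * D^[m] (f : K) :=
  bellP_eq_conj_iterate_general D hmul f u hu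
end

section
/- Let K be a differential ring with derivation D and let u ∈ K. For every natural number m and every y ∈ K, the m-th iterate of the operator y ↦ D(y) + u*y applied to y equals Σ_{j=0}^{m} C(m,j) * P_{m−j}(u) * D^j(y), where C(m,j) denotes the binomial coefficient. -/
open Finset

theorem AddMonoidHom.iterate_map_eq_sum_antidiagonal_choose_nsmul {M : Type*}
    [AddCommMonoid M] (L : M →+ M) (g : ℕ → ℕ → M)
    (hg : ∀ i j, L (g i j) = g i (j + 1) + g (i + 1) j) (n : ℕ) :
    L^[n] (g 0 0) = ∑ ij ∈ antidiagonal n, n.choose ij.1 • g ij.1 ij.2 := by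
  induction n with
  | zero => simp
  | succ n ih =>
    rw [Function.iterate_succ_apply', ih, sum_antidiagonal_choose_succ_nsmul, map_sum,
      ← sum_add_distrib]
    refine sum_congr rfl fun ij hij => ?_
    rw [map_nsmul, hg, smul_add, Nat.choose_symm_of_eq_add (mem_antidiagonal.mp hij).symm]

section DifferentialRing

variable {K : Type*} [Ring K] (D : K → K)

def shiftedDerivation (hadd : ∀ a b : K, D (a + b) = D a + D b) (u : K) : K →+ K :=
  AddMonoidHom.mk' (fun z => D z + u * z) fun a b => by
    rw [hadd, mul_add]
    abel

theorem shiftedDerivation_mul (hadd : ∀ a b : K, D (a + b) = D a + D b)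
    (hmul : ∀ a b : K, D (a * b) = D a * b + a * D b) (u a z : K) :
    shiftedDerivation D hadd u (a * z) = shiftedDerivation D hadd u a * z + a * D z := by
  change D (a * z) + u * (a * z) = (D a + u * a) * z + a * D z
  rw [hmul, add_mul, mul_assoc]
  abel

end DifferentialRing

/-- normal ordering of `(D + u)^m`. -/
theorem shifted_iterate_normal_order {K : Type*} [Ring K] (D : K → K)
    (hadd : ∀ a b : K, D (a + b) = D a + D b)
    (hmul : ∀ a b : K, D (a * b) = D a * b + a * D b)
    (u : K) (m : ℕ) (y : K) :
    (fun z => D z + u * z)^[m] y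
      = ∑ j ∈ Finset.range (m + 1),
          (m.choose j : K) * bellP D u (m - j) * D^[j] y := by
  have key := (shiftedDerivation D hadd u).iterate_map_eq_sum_antidiagonal_choose_nsmul
    (fun j k => bellP D u k * D^[j] y)
    (fun j k => by
      rw [Function.iterate_succ_apply']
      -- `bellP D u (k + 1)` is `shiftedDerivation D hadd u (bellP D u k)` by definition
      exact shiftedDerivation_mul D hadd hmul u _ _)
    m
  rw [Finset.Nat.sum_antidiagonal_eq_sum_range_succ_mk, bellP, Function.iterate_zero_apply,
    one_mul] at key
  simp only [nsmul_eq_mul, ← mul_assoc] at key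
  exact key
end

section
/- Let K be a differential ring with derivation D, let n be a natural number, let a_0 = 1, a_1, ..., a_n ∈ K, let f be a unit of K, and set u := f⁻¹ * D(f). Define ã_k := Σ_{j=0}^{k} C(k,j) * (f⁻¹ * a_{k−j} * f) * P_j(u) for 0 ≤ k ≤ n. Then for every y ∈ K, f⁻¹ * ( Σ_{i=0}^{n} C(n,i) * a_i * D^{n−i}(f*y) ) = Σ_{k=0}^{n} C(n,k) * ã_k * D^{n−k}(y). -/
open Finset

section Leibniz

variable {K : Type*} [Ring K] (D : K →+ K)

theorem iterate_map_mul_eq_sum_choose (hD : ∀ a b, D (a * b) = D a * b + a * D b)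
    (n : ℕ) (x y : K) :
    D^[n] (x * y) = ∑ i ∈ range (n + 1), (n.choose i : K) * (D^[i] x * D^[n - i] y) := by
  induction n with
  | zero => simp
  | succ n ih =>
    rw [sum_choose_succ_mul (R := K) (fun i j => D^[i] x * D^[j] y), Function.iterate_succ_apply',
      ih, map_sum D, ← sum_add_distrib]
    refine sum_congr rfl fun i hi => ?_
    have hin : n + 1 - i = n - i + 1 := by have := mem_range.1 hi; omega
    rw [← nsmul_eq_mul, map_nsmul, hD, nsmul_eq_mul, hin, mul_add]
    simp only [Function.iterate_succ_apply']
    abel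

theorem iterate_eq_mul_bellP (hD : ∀ a b, D (a * b) = D a * b + a * D b) {x u : K}
    (hx : D x = x * u) (m : ℕ) : D^[m] x = x * bellP D u m := by
  induction m with
  | zero => simp [bellP]
  | succ m ih =>
    rw [Function.iterate_succ_apply', ih, hD, hx, bellP, mul_add, mul_assoc]
    abel

end Leibniz

theorem Finset.sum_range_sum_range_sub_eq {M : Type*} [AddCommMonoid M] (n : ℕ)
    (F : ℕ → ℕ → M) :
    ∑ i ∈ range (n + 1), ∑ j ∈ range (n - i + 1), F i j
      = ∑ k ∈ range (n + 1), ∑ j ∈ range (k + 1), F (k - j) j := by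
  calc ∑ i ∈ range (n + 1), ∑ j ∈ range (n - i + 1), F i j
      = ∑ i ∈ range (n + 1), ∑ j ∈ range (n + 1 - i), F i j :=
        sum_congr rfl fun i hi => by rw [Nat.sub_add_comm (Nat.lt_succ_iff.1 (mem_range.1 hi))]
    _ = ∑ k ∈ range (n + 1), ∑ i ∈ range (k + 1), F i (k - i) := (sum_range_diag_flip _ _).symm
    _ = ∑ k ∈ range (n + 1), ∑ j ∈ range (k + 1), F (k - j) j := sum_congr rfl fun k _ => by
        rw [← Nat.sum_antidiagonal_eq_sum_range_succ F, ← Nat.sum_antidiagonal_swap]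
        exact Nat.sum_antidiagonal_eq_sum_range_succ (fun j i => F i j) k

theorem Nat.choose_mul_choose_sub_eq {n k j : ℕ} (hjk : j ≤ k) :
    n.choose (k - j) * (n - (k - j)).choose j = n.choose k * k.choose j := by
  have h := Nat.choose_mul (n := n) (Nat.sub_le k j)
  rw [Nat.sub_sub_self hjk, Nat.choose_symm hjk] at h
  exact h.symm

theorem gauge_action_on_coefficients_general {K : Type*} [Ring K] (D : K → K)
    (hadd : ∀ a b : K, D (a + b) = D a + D b)
    (hmul : ∀ a b : K, D (a * b) = D a * b + a * D b)
    (n : ℕ) (a : ℕ → K)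
    (f : Kˣ) (u : K) (hu : u = (↑f⁻¹ : K) * D (f : K))
    (ta : ℕ → K)
    (hta : ∀ k, ta k = ∑ j ∈ Finset.range (k + 1),
      (k.choose j : K) * ((↑f⁻¹ : K) * a (k - j) * (f : K)) * bellP D u j)
    (y : K) :
    (↑f⁻¹ : K) * (∑ i ∈ Finset.range (n + 1),
        (n.choose i : K) * a i * D^[n - i] ((f : K) * y))
      = ∑ k ∈ Finset.range (n + 1), (n.choose k : K) * ta k * D^[n - k] y := by
  let D' : K →+ K := AddMonoidHom.mk' D hadd
  have hDf : D' f = f * u := by rw [hu, ← mul_assoc, Units.mul_inv, one_mul]; rfl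
  have expand (m : ℕ) : D^[m] (f * y) =
      ∑ j ∈ range (m + 1), (m.choose j : K) * (f * bellP D u j * D^[m - j] y) := by
    have h := iterate_map_mul_eq_sum_choose D' hmul m f y
    simp_rw [iterate_eq_mul_bellP D' hmul hDf] at h
    exact h
  simp_rw [expand, hta, mul_sum, sum_mul]
  rw [sum_range_sum_range_sub_eq]
  refine sum_congr rfl fun k _ => sum_congr rfl fun j hj => ?_
  have hjk : j ≤ k := Nat.lt_succ_iff.1 (mem_range.1 hj)
  rw [Nat.sub_sub, Nat.sub_add_cancel hjk]
  -- `K` is noncommutative, so collect the binomial coefficients as `ℕ`-scalars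
  simp only [← nsmul_eq_mul, smul_mul_assoc, mul_smul_comm, smul_smul, mul_assoc]
  congr 1
  rw [mul_comm, Nat.choose_mul_choose_sub_eq hjk, mul_comm]

/-- gauge action on the binomially normalized coefficients. -/
theorem gauge_action_on_coefficients {K : Type*} [Ring K] (D : K → K)
    (hadd : ∀ a b : K, D (a + b) = D a + D b)
    (hmul : ∀ a b : K, D (a * b) = D a * b + a * D b)
    (n : ℕ) (a : ℕ → K) (ha0 : a 0 = 1)
    (f : Kˣ) (u : K) (hu : u = (↑f⁻¹ : K) * D (f : K))
    (ta : ℕ → K)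
    (hta : ∀ k, ta k = ∑ j ∈ Finset.range (k + 1),
      (k.choose j : K) * ((↑f⁻¹ : K) * a (k - j) * (f : K)) * bellP D u j)
    (y : K) :
    (↑f⁻¹ : K) * (∑ i ∈ Finset.range (n + 1),
        (n.choose i : K) * a i * D^[n - i] ((f : K) * y))
      = ∑ k ∈ Finset.range (n + 1), (n.choose k : K) * ta k * D^[n - k] y :=
  gauge_action_on_coefficients_general D hadd hmul n a f u hu ta hta y
end

section
/- Let K be a differential ring with derivation D, let a_0 = 1, a_1, ..., a_n ∈ K, let f be a unit of K, and set u := f⁻¹ * D(f). Let ã_k := Σ_{j=0}^{k} C(k,j) * (f⁻¹ * a_{k−j} * f) * P_j(u) be the gauge-transformed coefficients, and let Ĩ_k := Σ_{j=0}^{k} C(k,j) * ã_{k−j} * Q̃_j(−ã_1), where Q̃_j are the covariant Bell polynomials relative to ã_1. Similarly let I_k := Σ_{j=0}^{k} C(k,j) * a_{k−j} * Q_j(−a_1) with Q_j the covariant Bell polynomials relative to a_1. Then for every 0 ≤ k ≤ n one has the gauge covariance Ĩ_k = f⁻¹ * I_k * f. -/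
/-- Covariant Bell polynomials relative to `c`:
`Q 0 = 1`, `Q (m+1) = Δ_c (Q m) + u * Q m` where `Δ_c b = D b + c*b - b*c`. -/
def qBell {K : Type*} [Ring K] (D : K → K) (c u : K) : ℕ → K
  | 0 => 1
  | m + 1 =>
      (D (qBell D c u m) + c * qBell D c u m - qBell D c u m * c)
        + u * qBell D c u m

/-!
With `T_c b := D b - b * c`, the covariant Bell polynomials are `Q_j(-c) = T_c^j 1`, and `T_c`
obeys the twisted Leibniz rule `T_c (x * y) = D x * y + x * T_c y`, whence
`T_c^n (x * y) = ∑ C(n,j) D^(n-j) x * T_c^j y`. Write `x ⋆ y` for this binomial convolution of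
sequences; it is associative. From `f * P_j(u) = D^j f` one gets `ã = f⁻¹ * (a ⋆ D^• f)`, so
`f * ã_1 = a_1 * f + D f`, which says exactly that right multiplication by `f` intertwines `T_{a_1}`
with `T_{ã_1}`; hence `Q̃_j = T_{a_1}^j (f⁻¹) * f`. Therefore
`Ĩ = f⁻¹ * ((a ⋆ D^• f) ⋆ T_{a_1}^• f⁻¹) * f = f⁻¹ * (a ⋆ T_{a_1}^• (f * f⁻¹)) * f = f⁻¹ * I * f`.
-/

open Finset

section

variable {K : Type*} [Ring K]

def binomConv (x y : ℕ → K) (n : ℕ) : K :=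
  ∑ p ∈ antidiagonal n, n.choose p.2 • (x p.1 * y p.2)

theorem binomConv_eq_sum_range (x y : ℕ → K) (n : ℕ) :
    binomConv x y n = ∑ j ∈ range (n + 1), (n.choose j : K) * x (n - j) * y j := by
  rw [binomConv, ← Nat.sum_antidiagonal_swap]
  simp only [Prod.fst_swap, Prod.snd_swap]
  rw [Nat.sum_antidiagonal_eq_sum_range_succ (fun i j => n.choose i • (x j * y i))]
  simp only [nsmul_eq_mul, mul_assoc]

theorem binomConv_apply_zero (x y : ℕ → K) : binomConv x y 0 = x 0 * y 0 := by
  simp [binomConv]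

theorem binomConv_succ (x y : ℕ → K) (n : ℕ) :
    binomConv x y (n + 1) =
      binomConv (fun i => x (i + 1)) y n + binomConv x (fun j => y (j + 1)) n := by
  have hsymm : ∀ m : ℕ, ∀ p ∈ antidiagonal m, m.choose p.2 = m.choose p.1 := fun m p hp =>
    (Nat.choose_symm_of_eq_add (HasAntidiagonal.mem_antidiagonal.1 hp).symm).symm
  rw [binomConv, sum_congr rfl fun p hp => by rw [hsymm _ p hp],
    sum_antidiagonal_choose_succ_nsmul (fun i j => x i * y j), add_comm]
  exact congrArg _ (sum_congr rfl fun p hp => by rw [hsymm _ p hp])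

theorem binomConv_add_left (x x' y : ℕ → K) (n : ℕ) :
    binomConv (fun i => x i + x' i) y n = binomConv x y n + binomConv x' y n := by
  simp only [binomConv, add_mul, smul_add, sum_add_distrib]

theorem binomConv_add_right (x y y' : ℕ → K) (n : ℕ) :
    binomConv x (fun j => y j + y' j) n = binomConv x y n + binomConv x y' n := by
  simp only [binomConv, mul_add, smul_add, sum_add_distrib]

theorem binomConv_assoc (x y z : ℕ → K) (n : ℕ) :
    binomConv (binomConv x y) z n = binomConv x (binomConv y z) n := by
  induction n generalizing x y z with
  | zero => simp only [binomConv_apply_zero, mul_assoc]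
  | succ n ih =>
    simp only [binomConv_succ, binomConv_add_left, binomConv_add_right, ih]
    abel

theorem binomConv_mul_left (c : K) (x y : ℕ → K) (n : ℕ) :
    binomConv (fun i => c * x i) y n = c * binomConv x y n := by
  simp only [binomConv, mul_sum, mul_smul_comm, mul_assoc]

theorem binomConv_mul_right (x y : ℕ → K) (d : K) (n : ℕ) :
    binomConv x (fun j => y j * d) n = binomConv x y n * d := by
  simp only [binomConv, sum_mul, smul_mul_assoc, mul_assoc]

theorem binomConv_mul_middle (x y : ℕ → K) (c : K) (n : ℕ) :
    binomConv (fun i => x i * c) y n = binomConv x (fun j => c * y j) n := by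
  simp only [binomConv, mul_assoc]

theorem iterate_map_mul_eq_binomConv (D : K → K) (T : K →+ K)
    (hT : ∀ x y, T (x * y) = D x * y + x * T y) (x y : K) (n : ℕ) :
    T^[n] (x * y) = binomConv (fun i => D^[i] x) (fun j => T^[j] y) n := by
  induction n with
  | zero => simp [binomConv_apply_zero]
  | succ n ih =>
    rw [binomConv_succ, Function.iterate_succ_apply', ih, binomConv, map_sum]
    simp only [map_nsmul, hT, smul_add, sum_add_distrib, Function.iterate_succ_apply']
    rfl

theorem mul_bellP_eq_iterate (D : K → K) (hmul : ∀ a b : K, D (a * b) = D a * b + a * D b)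
    {g u : K} (hgu : g * u = D g) (j : ℕ) : g * bellP D u j = D^[j] g := by
  induction j with
  | zero => simp [bellP]
  | succ j ih =>
    rw [Function.iterate_succ_apply', ← ih, hmul, bellP, mul_add, ← mul_assoc, hgu, add_comm]

section TwistedDerivation

variable (D : K →+ K)

theorem qBell_neg_eq_iterate (c : K) (m : ℕ) :
    qBell D c (-c) m = (⇑(D - AddMonoidHom.mulRight c))^[m] 1 := by
  induction m with
  | zero => rfl
  | succ m ih =>
    rw [Function.iterate_succ_apply', ← ih, qBell]
    simp only [AddMonoidHom.sub_apply, AddMonoidHom.coe_mulRight, neg_mul]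
    abel

variable (hmul : ∀ a b : K, D (a * b) = D a * b + a * D b)
include hmul

theorem sub_mulRight_map_mul (c x y : K) :
    (D - AddMonoidHom.mulRight c) (x * y) = D x * y + x * (D - AddMonoidHom.mulRight c) y := by
  simp only [AddMonoidHom.sub_apply, AddMonoidHom.coe_mulRight, hmul, mul_sub, mul_assoc]
  abel

theorem semiconj_mul_right_sub_mulRight {f c c' : K} (h : f * c' = c * f + D f) :
    Function.Semiconj (· * f) ⇑(D - AddMonoidHom.mulRight c) ⇑(D - AddMonoidHom.mulRight c') := by
  intro b
  simp only [AddMonoidHom.sub_apply, AddMonoidHom.coe_mulRight, hmul, mul_assoc, h, mul_add,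
    sub_mul]
  abel

end TwistedDerivation

end

/-- gauge covariance of the covariants `I_k`. -/
theorem Ik_gauge_covariance {K : Type*} [Ring K] (D : K → K)
    (hadd : ∀ a b : K, D (a + b) = D a + D b)
    (hmul : ∀ a b : K, D (a * b) = D a * b + a * D b)
    (n : ℕ) (a : ℕ → K) (ha0 : a 0 = 1)
    (f : Kˣ) (u : K) (hu : u = (↑f⁻¹ : K) * D (f : K))
    (ta : ℕ → K)
    (hta : ∀ k, ta k = ∑ j ∈ Finset.range (k + 1),
      (k.choose j : K) * ((↑f⁻¹ : K) * a (k - j) * (f : K)) * bellP D u j)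
    (I tI : ℕ → K)
    (hI : ∀ k, I k = ∑ j ∈ Finset.range (k + 1),
      (k.choose j : K) * a (k - j) * qBell D (a 1) (-(a 1)) j)
    (htI : ∀ k, tI k = ∑ j ∈ Finset.range (k + 1),
      (k.choose j : K) * ta (k - j) * qBell D (ta 1) (-(ta 1)) j) :
    ∀ k ≤ n, tI k = (↑f⁻¹ : K) * I k * (f : K) := by
  intro k _
  obtain ⟨D, rfl⟩ : ∃ D' : K →+ K, ⇑D' = D := ⟨AddMonoidHom.mk' D hadd, rfl⟩
  set T := D - AddMonoidHom.mulRight (a 1)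
  have hta' : ta = fun k => ↑f⁻¹ * binomConv a (fun i => D^[i] f) k := by
    have hfu : (f : K) * u = D f := by rw [hu, Units.mul_inv_cancel_left]
    funext k
    calc ta k = binomConv (fun i => ↑f⁻¹ * (a i * f)) (bellP D u) k := by
          rw [hta, binomConv_eq_sum_range]; simp only [mul_assoc]
      _ = ↑f⁻¹ * binomConv a (fun j => f * bellP D u j) k := by
          rw [binomConv_mul_left, binomConv_mul_middle]
      _ = ↑f⁻¹ * binomConv a (fun i => D^[i] f) k := by
          simp only [mul_bellP_eq_iterate D hmul hfu]
  have hta1 : (f : K) * ta 1 = a 1 * f + D f := by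
    rw [hta', Units.mul_inv_cancel_left, binomConv_succ, binomConv_apply_zero,
      binomConv_apply_zero, ha0]
    simp
  have htQ : qBell D (ta 1) (-(ta 1)) = fun j => T^[j] ↑f⁻¹ * f := by
    funext j
    rw [qBell_neg_eq_iterate, ← Units.inv_mul f,
      ((semiconj_mul_right_sub_mulRight D hmul hta1).iterate_right j).eq]
  have hQ : binomConv (fun i => D^[i] f) (fun j => T^[j] ↑f⁻¹) = qBell D (a 1) (-(a 1)) := by
    funext j
    rw [qBell_neg_eq_iterate, ← iterate_map_mul_eq_binomConv D T (sub_mulRight_map_mul D hmul _),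
      Units.mul_inv]
  calc tI k = binomConv ta (qBell D (ta 1) (-(ta 1))) k := by rw [htI, binomConv_eq_sum_range]
    _ = ↑f⁻¹ * binomConv (binomConv a (fun i => D^[i] f)) (fun j => T^[j] ↑f⁻¹) k * f := by
      rw [htQ, hta', binomConv_mul_left, binomConv_mul_right, mul_assoc]
    _ = ↑f⁻¹ * I k * f := by rw [binomConv_assoc, hQ, hI, binomConv_eq_sum_range, mul_assoc]
end

section
/- Let K be a differential ring with derivation D, let a_0 = 1, a_1, ..., a_n ∈ K, and let u ∈ K be arbitrary. Define I_k := Σ_{j=0}^{k} C(k,j) * a_{k−j} * Q_j(−a_1) (so I_0 = 1 and I_1 = 0), and define the u-star-transformed coefficients a_k^{⋆u} := Σ_{m=0}^{k} C(k,m) * I_m * P_{k−m}(a_1 − u). Then for every y ∈ K one has Σ_{m=0}^{n} C(n,m) * I_m * ∇_u^{n−m}(y) = Σ_{k=0}^{n} C(n,k) * a_k^{⋆u} * D^{n−k}(y), where ∇_u(y) = D(y) + (a_1 − u)*y and ∇_u^m is the m-th iterate of ∇_u. -/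
/-! Write `∇ = D + c` with `c = a 1 - u` acting by left multiplication. The Leibniz rule gives the
operator expansion `∇^j = ∑ᵢ C(j,i) P_{j-i}(c) D^i`, exactly as for `(D + c)^j` in the commutative
case with the Bell polynomials in place of the powers of `c`. Substituted into the left-hand side this
gives a sum over triples `m + k + i = n` weighted by `C(n,m) C(n-m,i) = C(n,i) C(n-i,m)`, and grouping
it by `n - i` yields the right-hand side. -/

open Finset

theorem iterate_add_mul_left_eq_sum_bellP {K : Type*} [Ring K] (D : K → K)
    (hadd : ∀ a b : K, D (a + b) = D a + D b)
    (hmul : ∀ a b : K, D (a * b) = D a * b + a * D b) (c y : K) (j : ℕ) :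
    (fun z => D z + c * z)^[j] y
      = ∑ i ∈ range (j + 1), j.choose i • (bellP D c (j - i) * D^[i] y) := by
  let D' : K →+ K := AddMonoidHom.mk' D hadd
  rw [← Nat.sum_antidiagonal_eq_sum_range_succ (fun i k => j.choose i • (bellP D c k * D^[i] y))]
  induction j with
  | zero => simp [bellP]
  | succ j ih =>
    rw [Function.iterate_succ_apply', ih, sum_antidiagonal_choose_succ_nsmul
      (fun i k => bellP D c k * D^[i] y), ← sum_add_distrib]
    change D' _ + _ = _
    rw [map_sum, mul_sum, ← sum_add_distrib]
    refine sum_congr rfl fun p hp => ?_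
    rw [Nat.choose_symm_of_eq_add (mem_antidiagonal.1 hp).symm, ← smul_add, map_nsmul,
      mul_smul_comm, ← smul_add]
    change j.choose p.2 • (D _ + _) = _
    rw [hmul, Function.iterate_succ_apply', bellP]
    noncomm_ring

theorem Nat.choose_mul_choose_sub_comm {n m i : ℕ} (h : m + i ≤ n) :
    n.choose m * (n - m).choose i = n.choose i * (n - i).choose m := by
  rw [← Nat.choose_symm (show i ≤ n by omega), Nat.choose_mul (show m ≤ n - i by omega),
    Nat.choose_symm_of_eq_add (show n - m = n - i - m + i by omega)]

theorem sum_range_choose_smul_sum_range_choose_smul {M : Type*} [AddCommMonoid M]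
    (f : ℕ → ℕ → ℕ → M) (n : ℕ) :
    ∑ m ∈ range (n + 1), n.choose m • ∑ i ∈ range (n - m + 1), (n - m).choose i • f m (n - m - i) i
      = ∑ k ∈ range (n + 1), n.choose k • ∑ m ∈ range (k + 1), k.choose m • f m (k - m) (n - k) := by
  simp only [smul_sum, smul_smul]
  calc _ = ∑ m ∈ range (n + 1), ∑ i ∈ range (n - m + 1),
          (n.choose i * (n - i).choose m) • f m (n - i - m) i := by
        refine sum_congr rfl fun m hm => sum_congr rfl fun i hi => ?_
        simp only [mem_range] at hm hi
        rw [Nat.choose_mul_choose_sub_comm (by omega), Nat.sub_right_comm]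
    _ = ∑ i ∈ range (n + 1), ∑ m ∈ range (n - i + 1),
          (n.choose i * (n - i).choose m) • f m (n - i - m) i :=
        sum_comm' fun m i => by simp only [mem_range]; omega
    _ = _ := by
        rw [← sum_range_reflect]
        refine sum_congr rfl fun i hi => ?_
        rw [mem_range] at hi
        rw [Nat.add_sub_cancel, Nat.sub_sub_self (by omega), Nat.choose_symm (by omega)]

theorem star_action_coefficients_general {K : Type*} [Ring K] (D : K → K)
    (hadd : ∀ a b : K, D (a + b) = D a + D b)
    (hmul : ∀ a b : K, D (a * b) = D a * b + a * D b)
    (n : ℕ) (a : ℕ → K) (u : K)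
    (I : ℕ → K)
    (astar : ℕ → K)
    (hastar : ∀ k, astar k = ∑ m ∈ Finset.range (k + 1),
      (k.choose m : K) * I m * bellP D (a 1 - u) (k - m))
    (y : K) :
    ∑ m ∈ Finset.range (n + 1),
        (n.choose m : K) * I m * (fun z => D z + (a 1 - u) * z)^[n - m] y
      = ∑ k ∈ Finset.range (n + 1), (n.choose k : K) * astar k * D^[n - k] y := by
  generalize a 1 - u = c at hastar ⊢
  have expand_left : ∀ m, (n.choose m : K) * I m * (fun z => D z + c * z)^[n - m] y
      = n.choose m • ∑ i ∈ range (n - m + 1),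
          (n - m).choose i • (I m * (bellP D c (n - m - i) * D^[i] y)) := by
    intro m
    rw [iterate_add_mul_left_eq_sum_bellP D hadd hmul, ← nsmul_eq_mul, smul_mul_assoc, mul_sum]
    simp only [mul_smul_comm]
  have expand_right : ∀ k, (n.choose k : K) * astar k * D^[n - k] y
      = n.choose k • ∑ m ∈ range (k + 1),
          k.choose m • (I m * (bellP D c (k - m) * D^[n - k] y)) := by
    intro k
    rw [hastar, ← nsmul_eq_mul, smul_mul_assoc, sum_mul]
    simp only [← nsmul_eq_mul, smul_mul_assoc, mul_assoc]
  simp only [expand_left, expand_right]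
  exact sum_range_choose_smul_sum_range_choose_smul (fun m k i => I m * (bellP D c k * D^[i] y)) n

/-- explicit coefficient formula for the `u⋆`-action. -/
theorem star_action_coefficients {K : Type*} [Ring K] (D : K → K)
    (hadd : ∀ a b : K, D (a + b) = D a + D b)
    (hmul : ∀ a b : K, D (a * b) = D a * b + a * D b)
    (n : ℕ) (a : ℕ → K) (ha0 : a 0 = 1) (u : K)
    (I : ℕ → K)
    (hI : ∀ k, I k = ∑ j ∈ Finset.range (k + 1),
      (k.choose j : K) * a (k - j) * qBell D (a 1) (-(a 1)) j)
    (astar : ℕ → K)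
    (hastar : ∀ k, astar k = ∑ m ∈ Finset.range (k + 1),
      (k.choose m : K) * I m * bellP D (a 1 - u) (k - m))
    (y : K) :
    ∑ m ∈ Finset.range (n + 1),
        (n.choose m : K) * I m * (fun z => D z + (a 1 - u) * z)^[n - m] y
      = ∑ k ∈ Finset.range (n + 1), (n.choose k : K) * astar k * D^[n - k] y :=
  star_action_coefficients_general D hadd hmul n a u I astar hastar y
end

section
/- Let K be a unital associative ℚ-algebra with a derivation D (an additive map satisfying the Leibniz rule), let φ : K → K be a ring homomorphism, and let σ be a central unit of K such that all iterated derivatives D^j(σ) are central and such that the chain rule D(φ(a)) = σ⁻¹ * φ(D(a)) holds for all a ∈ K. Fix n ≥ 2 and oper-gauge coefficients a_0 = 1, a_1 = 0, and a_2, ..., a_n ∈ K. Let B_{m,j} be defined by B_{0,0} = 1, B_{m,j} = 0 for j < 0 or j > m, and B_{m+1,j} = σ * B_{m,j−1} + σ * D(B_{m,j}), and define the pulled-back coefficients ã_m := C(n,m)⁻¹ • Σ_{i=0}^{m} C(n,i) * φ(a_i) * σ^{−n} * B_{n−i, n−m} for m = 1, 2. Then ã_2 − D(ã_1) − ã_1^2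 = σ^{−2} * φ(a_2) + ((n+1)/6) • S, where S := −D^2(σ) * σ⁻¹ + (1/2) • (D(σ) * σ⁻¹)^2 is the Schwarzian in σ-notation. -/
/-!
Only the top three diagonals of the normal-ordered expansion of `(σ∂)ᵐ` enter `ã₁` and `ã₂`.
The recursion gives `B_{m,m} = σᵐ`, `B_{m+1,m} = C(m+1,2) σᵐ σ'` and
`B_{m+2,m} = α σᵐ σ'² + β σᵐ⁺¹ σ''` with explicit rational `α, β`, so that
`ã₁ = (n-1)/2 · σ'/σ` and `ã₂ = σ⁻² φ(a₂) + (n-2)(3n-5)/12 · (σ'/σ)² + (n-2)/3 · σ''/σ`.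
Since `σ, σ', σ''` are central, the rule `(σ'/σ)' = σ''/σ - (σ'/σ)²` turns `ã₂ - ã₁' - ã₁²`
into `σ⁻² φ(a₂)` plus `(n+1)/6` times the Schwarzian.
-/

open Finset

theorem Units.inv_pow_add_mul_pow {M : Type*} [Monoid M] (u : Mˣ) (k j : ℕ) :
    (↑u⁻¹ : M) ^ (k + j) * ↑u ^ k = ↑u⁻¹ ^ j := by
  simp only [← Units.val_pow_eq_pow_val, ← Units.val_mul]
  congr 1
  group

section Leibniz

variable {K : Type*} [Ring K] (D : K →+ K)

theorem map_one_eq_zero_of_leibniz_s15 (hmul : ∀ a b : K, D (a * b) = D a * b + a * D b) :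
    D 1 = 0 := by
  simpa using hmul 1 1

theorem map_pow_succ_of_leibniz (hmul : ∀ a b : K, D (a * b) = D a * b + a * D b) {s : K}
    (hs : Commute s (D s)) (k : ℕ) : D (s ^ (k + 1)) = (k + 1) • (s ^ k * D s) := by
  induction k with
  | zero => simp
  | succ k ih =>
    rw [pow_succ, hmul, ih, smul_mul_assoc, mul_assoc, ← hs.eq, ← mul_assoc, ← pow_succ,
      succ_nsmul _ (k + 1)]

theorem map_units_inv_of_leibniz_s15 (hmul : ∀ a b : K, D (a * b) = D a * b + a * D b) (σ : Kˣ) :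
    D ↑σ⁻¹ = -(↑σ⁻¹ * D σ * ↑σ⁻¹) := by
  have h := hmul σ ↑σ⁻¹
  rw [Units.mul_inv, map_one_eq_zero_of_leibniz_s15 D hmul] at h
  calc D ↑σ⁻¹ = ↑σ⁻¹ * (σ * D ↑σ⁻¹) := by rw [← mul_assoc, Units.inv_mul, one_mul]
    _ = -(↑σ⁻¹ * D σ * ↑σ⁻¹) := by rw [eq_neg_of_add_eq_zero_right h.symm]; noncomm_ring

-- No commutativity is needed: both sides contain the same word `σ⁻¹ σ' σ⁻¹ σ'`.
theorem map_units_inv_mul_map_of_leibniz (hmul : ∀ a b : K, D (a * b) = D a * b + a * D b)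
    (σ : Kˣ) :
    D (↑σ⁻¹ * D σ) = ↑σ⁻¹ * D (D σ) - (↑σ⁻¹ * D σ) ^ 2 := by
  rw [hmul, map_units_inv_of_leibniz_s15 D hmul]
  noncomm_ring

end Leibniz

/-- `B m j` is the coefficient of `∂ ^ j` in the normal-ordered expansion of `(s ∂) ^ m`,
where `∂ a = a ∂ + D a`. -/
structure IsNormalOrderedCoeffs {K : Type*} [Ring K] (D : K → K) (s : K) (B : ℕ → ℤ → K) :
    Prop where
  zero_zero : B 0 0 = 1
  eq_zero : ∀ (m : ℕ) (j : ℤ), j < 0 ∨ (m : ℤ) < j → B m j = 0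
  succ : ∀ (m : ℕ) (j : ℤ), B (m + 1) j = s * B m (j - 1) + s * D (B m j)

/-- When `B` are the normal-ordered coefficients of the powers of `σ ∂`, this is the coefficient of
`∂ ^ (n - j)` in `σ⁻ⁿ ∑ᵢ C(n,i) cᵢ (σ ∂) ^ (n - i)`, divided by `C(n,j)`. -/
def pulledBackCoeff {K : Type*} [Ring K] [Algebra ℚ K] (σ : Kˣ) (B : ℕ → ℤ → K) (c : ℕ → K)
    (n j : ℕ) : K :=
  ((n.choose j : ℚ)⁻¹) •
    ∑ i ∈ range (j + 1), (n.choose i : K) * c i * (↑σ⁻¹ : K) ^ n * B (n - i) ((n : ℤ) - j)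

namespace IsNormalOrderedCoeffs

variable {K : Type*} [Ring K] {D : K →+ K} {s : K} {B : ℕ → ℤ → K}

theorem diag (hB : IsNormalOrderedCoeffs D s B) (k : ℕ) : B k k = s ^ k := by
  induction k with
  | zero => simpa using hB.zero_zero
  | succ k ih =>
    rw [hB.succ, Nat.cast_succ, add_sub_cancel_right, ih,
      hB.eq_zero k (k + 1) (Or.inr (by omega)), map_zero, mul_zero, add_zero, pow_succ']

variable [Algebra ℚ K]

theorem subdiag_one (hB : IsNormalOrderedCoeffs D s B)
    (hmul : ∀ a b : K, D (a * b) = D a * b + a * D b) (hs : Commute s (D s)) (k : ℕ) :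
    B (k + 1) k = (k * (k + 1) / 2 : ℚ) • (s ^ k * D s) := by
  induction k with
  | zero =>
    rw [hB.succ, hB.eq_zero 0 _ (Or.inl (by norm_num)), Nat.cast_zero, hB.zero_zero,
      map_one_eq_zero_of_leibniz_s15 D hmul]
    simp
  | succ k ih =>
    rw [hB.succ, hB.diag, Nat.cast_succ, add_sub_cancel_right, ih,
      map_pow_succ_of_leibniz D hmul hs]
    simp only [mul_smul_comm, ← mul_assoc, ← pow_succ']
    push_cast
    module

theorem subdiag_two (hB : IsNormalOrderedCoeffs D s B)
    (hmul : ∀ a b : K, D (a * b) = D a * b + a * D b) (hs : Commute s (D s)) (k : ℕ) :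
    B (k + 2) k = (k * (k + 1) * (3 * k + 1) * (k + 2) / 24 : ℚ) • (s ^ k * D s ^ 2)
      + (k * (k + 1) * (k + 2) / 6 : ℚ) • (s ^ (k + 1) * D (D s)) := by
  induction k with
  | zero =>
    rw [hB.succ, hB.eq_zero 1 _ (Or.inl (by norm_num))]
    have hB10 : B 1 0 = 0 := by simpa using hB.subdiag_one hmul hs 0
    simp [hB10]
  | succ k ih =>
    have hD : D (s ^ (k + 1) * D s) = (k + 1) • (s ^ k * D s ^ 2) + s ^ (k + 1) * D (D s) := by
      rw [hmul, map_pow_succ_of_leibniz D hmul hs, smul_mul_assoc, mul_assoc, ← sq]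
    rw [hB.succ, hB.subdiag_one hmul hs, Nat.cast_succ, add_sub_cancel_right, ih, map_rat_smul,
      hD]
    simp only [mul_add, mul_smul_comm, ← mul_assoc, ← pow_succ']
    push_cast
    module

variable {σ : Kˣ} {c : ℕ → K}

theorem inv_pow_mul_subdiag_one (hB : IsNormalOrderedCoeffs D σ B)
    (hmul : ∀ a b : K, D (a * b) = D a * b + a * D b) (hσ : Commute (σ : K) (D σ)) (k : ℕ) :
    (↑σ⁻¹ : K) ^ (k + 1) * B (k + 1) k = (k * (k + 1) / 2 : ℚ) • (↑σ⁻¹ * D σ) := by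
  rw [hB.subdiag_one hmul hσ, mul_smul_comm, ← mul_assoc, σ.inv_pow_add_mul_pow, pow_one]

theorem inv_pow_mul_subdiag_two (hB : IsNormalOrderedCoeffs D σ B)
    (hmul : ∀ a b : K, D (a * b) = D a * b + a * D b) (hσ : Commute (σ : K) (D σ)) (k : ℕ) :
    (↑σ⁻¹ : K) ^ (k + 2) * B (k + 2) k
      = (k * (k + 1) * (3 * k + 1) * (k + 2) / 24 : ℚ) • (↑σ⁻¹ * D σ) ^ 2
        + (k * (k + 1) * (k + 2) / 6 : ℚ) • (↑σ⁻¹ * D (D σ)) := by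
  rw [hB.subdiag_two hmul hσ, mul_add, mul_smul_comm, mul_smul_comm, ← mul_assoc, ← mul_assoc,
    σ.inv_pow_add_mul_pow, show k + 2 = k + 1 + 1 from rfl, σ.inv_pow_add_mul_pow, pow_one,
    hσ.units_inv_left.mul_pow]

theorem pulledBackCoeff_one (hB : IsNormalOrderedCoeffs D σ B)
    (hmul : ∀ a b : K, D (a * b) = D a * b + a * D b) (hσ : Commute (σ : K) (D σ))
    (hc0 : c 0 = 1) (hc1 : c 1 = 0) (k : ℕ) :
    pulledBackCoeff σ B c (k + 1) 1 = (k / 2 : ℚ) • (↑σ⁻¹ * D σ) := by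
  simp only [pulledBackCoeff, sum_range_succ, sum_range_zero, zero_add, hc0, hc1, mul_zero,
    zero_mul, add_zero, Nat.choose_zero_right, Nat.cast_one, one_mul, mul_one, Nat.sub_zero,
    Nat.choose_one_right]
  push_cast [add_sub_cancel_right]
  rw [hB.inv_pow_mul_subdiag_one hmul hσ, smul_smul]
  congr 1
  field_simp

theorem pulledBackCoeff_two (hB : IsNormalOrderedCoeffs D σ B)
    (hmul : ∀ a b : K, D (a * b) = D a * b + a * D b) (hσ : Commute (σ : K) (D σ))
    (hc0 : c 0 = 1) (hc1 : c 1 = 0) (hc2 : Commute (σ : K) (c 2)) (k : ℕ) :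
    pulledBackCoeff σ B c (k + 2) 2 = (k * (3 * k + 1) / 12 : ℚ) • (↑σ⁻¹ * D σ) ^ 2
      + (k / 3 : ℚ) • (↑σ⁻¹ * D (D σ)) + ↑σ⁻¹ ^ 2 * c 2 := by
  simp only [pulledBackCoeff, sum_range_succ, sum_range_zero, zero_add, hc0, hc1, mul_zero,
    zero_mul, add_zero, Nat.choose_zero_right, Nat.cast_one, one_mul, mul_one, Nat.sub_zero,
    Nat.add_sub_cancel]
  have hC : ((k + 2).choose 2 : ℚ) = (k + 1) * (k + 2) / 2 := by
    rw [Nat.cast_choose_two]; push_cast; ring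
  push_cast [add_sub_cancel_right]
  rw [hB.diag, hB.inv_pow_mul_subdiag_two hmul hσ, mul_assoc (_ * c 2), σ.inv_pow_add_mul_pow,
    mul_assoc (((k + 2).choose 2 : ℕ) : K), ← (hc2.units_inv_left.pow_left 2).eq,
    ← map_natCast (algebraMap ℚ K), ← Algebra.smul_def, smul_add, smul_smul,
    inv_mul_cancel₀ (Nat.cast_ne_zero.2 (Nat.choose_pos (by omega)).ne'), one_smul, hC]
  match_scalars <;> field_simp <;> ring

end IsNormalOrderedCoeffs

theorem I2_reparametrization_schwarzian_general {K : Type*} [Ring K] [Algebra ℚ K]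
    (D : K → K)
    (hadd : ∀ a b : K, D (a + b) = D a + D b)
    (hmul : ∀ a b : K, D (a * b) = D a * b + a * D b)
    (φ : K →+* K) (σ : Kˣ)
    (hcentral : ∀ (j : ℕ) (x : K), D^[j] (σ : K) * x = x * D^[j] (σ : K))
    (n : ℕ) (hn : 2 ≤ n)
    (a : ℕ → K) (ha0 : a 0 = 1) (ha1 : a 1 = 0)
    (B : ℕ → ℤ → K)
    (hB00 : B 0 0 = 1)
    (hBzero : ∀ (m : ℕ) (j : ℤ), j < 0 ∨ (m : ℤ) < j → B m j = 0)
    (hBrec : ∀ (m : ℕ) (j : ℤ),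
      B (m + 1) j = (σ : K) * B m (j - 1) + (σ : K) * D (B m j))
    (ta1 ta2 : K)
    (hta1 : ta1 = ((n.choose 1 : ℚ)⁻¹) •
      ∑ i ∈ Finset.range 2,
        (n.choose i : K) * φ (a i) * (↑σ⁻¹ : K) ^ n * B (n - i) ((n : ℤ) - 1))
    (hta2 : ta2 = ((n.choose 2 : ℚ)⁻¹) •
      ∑ i ∈ Finset.range 3,
        (n.choose i : K) * φ (a i) * (↑σ⁻¹ : K) ^ n * B (n - i) ((n : ℤ) - 2)) :
    ta2 - D ta1 - ta1 ^ 2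
      = (↑σ⁻¹ : K) ^ 2 * φ (a 2)
          + (((n : ℚ) + 1) / 6) •
              (-(D (D (σ : K)) * (↑σ⁻¹ : K))
                + (1 / 2 : ℚ) • (D (σ : K) * (↑σ⁻¹ : K)) ^ 2) := by
  obtain ⟨m, rfl⟩ : ∃ m, n = m + 2 := ⟨n - 2, by omega⟩
  obtain ⟨D, rfl⟩ : ∃ D' : K →+ K, ⇑D' = D := ⟨AddMonoidHom.mk' D hadd, rfl⟩
  have hB : IsNormalOrderedCoeffs D σ B := ⟨hB00, hBzero, hBrec⟩
  have hσ : Commute (σ : K) (D σ) := hcentral 0 _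
  have hDσ : D σ * ↑σ⁻¹ = ↑σ⁻¹ * D σ := hcentral 1 _
  have hDDσ : D (D σ) * ↑σ⁻¹ = ↑σ⁻¹ * D (D σ) := hcentral 2 _
  have hc0 : φ (a 0) = 1 := by rw [ha0, map_one]
  have hc1 : φ (a 1) = 0 := by rw [ha1, map_zero]
  have hta1' : ta1 = (((m : ℚ) + 1) / 2) • (↑σ⁻¹ * D σ) := by
    rw [hta1, ← Nat.cast_add_one]
    exact hB.pulledBackCoeff_one hmul hσ hc0 hc1 (m + 1)
  have hta2' := hta2.trans (hB.pulledBackCoeff_two hmul hσ hc0 hc1 (hcentral 0 _) m)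
  have hDta1 : D ta1 = (((m : ℚ) + 1) / 2) • (↑σ⁻¹ * D (D σ) - (↑σ⁻¹ * D σ) ^ 2) := by
    rw [hta1', map_rat_smul, map_units_inv_mul_map_of_leibniz D hmul σ]
  rw [hta2', hDta1, hta1', hDDσ, hDσ, smul_pow]
  push_cast
  module

/-- the reparametrized `I₂` picks up the Schwarzian anomaly
`((n+1)/6) S(λ)` in the `σ`-formalism. -/
theorem I2_reparametrization_schwarzian {K : Type*} [Ring K] [Algebra ℚ K]
    (D : K → K)
    (hadd : ∀ a b : K, D (a + b) = D a + D b)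
    (hmul : ∀ a b : K, D (a * b) = D a * b + a * D b)
    (φ : K →+* K) (σ : Kˣ)
    (hcentral : ∀ (j : ℕ) (x : K), D^[j] (σ : K) * x = x * D^[j] (σ : K))
    (hchain : ∀ x : K, D (φ x) = (↑σ⁻¹ : K) * φ (D x))
    (n : ℕ) (hn : 2 ≤ n)
    (a : ℕ → K) (ha0 : a 0 = 1) (ha1 : a 1 = 0)
    (B : ℕ → ℤ → K)
    (hB00 : B 0 0 = 1)
    (hBzero : ∀ (m : ℕ) (j : ℤ), j < 0 ∨ (m : ℤ) < j → B m j = 0)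
    (hBrec : ∀ (m : ℕ) (j : ℤ),
      B (m + 1) j = (σ : K) * B m (j - 1) + (σ : K) * D (B m j))
    (ta1 ta2 : K)
    (hta1 : ta1 = ((n.choose 1 : ℚ)⁻¹) •
      ∑ i ∈ Finset.range 2,
        (n.choose i : K) * φ (a i) * (↑σ⁻¹ : K) ^ n * B (n - i) ((n : ℤ) - 1))
    (hta2 : ta2 = ((n.choose 2 : ℚ)⁻¹) •
      ∑ i ∈ Finset.range 3,
        (n.choose i : K) * φ (a i) * (↑σ⁻¹ : K) ^ n * B (n - i) ((n : ℤ) - 2)) :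
    ta2 - D ta1 - ta1 ^ 2
      = (↑σ⁻¹ : K) ^ 2 * φ (a 2)
          + (((n : ℚ) + 1) / 6) •
              (-(D (D (σ : K)) * (↑σ⁻¹ : K))
                + (1 / 2 : ℚ) • (D (σ : K) * (↑σ⁻¹ : K)) ^ 2) :=
  I2_reparametrization_schwarzian_general D hadd hmul φ σ hcentral n hn a ha0 ha1 B hB00 hBzero
    hBrec ta1 ta2 hta1 hta2
end

section
/- Let k ∈ ℤ, and let a, b, c, d be real numbers with a*d − b*c = 1. Let ℍ := { z ∈ ℂ : 0 < Im z }, and let f, G : ℂ → ℂ be complex differentiable at every point of ℍ. Suppose that for all z ∈ ℍ: f((a*z+b)/(c*z+d)) = (c*z+d)^k * f(z) (weight-k modularity of f) and G((a*z+b)/(c*z+d)) = (c*z+d)^2 * G(z) + 2*c*(c*z+d) (modular connection law for G). Define ∇f : ℂ → ℂ by (∇f)(z) := deriv f z − (k/2) * G(z) * f(z). Then for all z ∈ ℍ, (∇f)((a*z+b)/(c*z+d)) = (c*z+d)^{k+2} * (∇f)(z); that is, the covariant derivative ∇f transforms with weight k+2. -/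
/-!
Differentiate the weight-`k` law `f (γ z) = (c z + d) ^ k * f z` using `γ' z = (c z + d)⁻²`:
this gives `f' (γ z) = (c z + d) ^ (k + 2) * f' z + k c (c z + d) ^ (k + 1) * f z`. The second
term is exactly what the inhomogeneous term `2 c (c z + d)` of the connection law for `G`
produces in `(k / 2) * G * f`, so the two cancel in `f' - (k / 2) G f`.
-/

open Filter Topology

lemma ofReal_mul_add_ofReal_ne_zero {c d : ℝ} (hcd : c ≠ 0 ∨ d ≠ 0) {z : ℂ} (hz : 0 < z.im) :
    (c : ℂ) * z + d ≠ 0 := by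
  intro h
  have him : c * z.im = 0 := by simpa using congrArg Complex.im h
  have hc : c = 0 := by
    rcases mul_eq_zero.mp him with hc | hc
    · exact hc
    · exact absurd hc hz.ne'
  have hd : d = 0 := by simpa [hc] using congrArg Complex.re h
  tauto

lemma im_moebius (a b c d : ℝ) (z : ℂ) :
    (((a : ℂ) * z + b) / ((c : ℂ) * z + d)).im
      = (a * d - b * c) * z.im / Complex.normSq ((c : ℂ) * z + d) := by
  simp only [Complex.div_im, Complex.add_re, Complex.add_im, Complex.mul_re, Complex.mul_im,
    Complex.ofReal_re, Complex.ofReal_im]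
  ring

lemma hasDerivAt_moebius {𝕜 : Type*} [NontriviallyNormedField 𝕜] (a b c d : 𝕜) {z : 𝕜}
    (hz : c * z + d ≠ 0) :
    HasDerivAt (fun u => (a * u + b) / (c * u + d)) ((a * d - b * c) / (c * z + d) ^ 2) z := by
  have hnum : HasDerivAt (fun u => a * u + b) a z := by
    simpa using ((hasDerivAt_id z).const_mul a).add_const b
  have hden : HasDerivAt (fun u => c * u + d) c z := by
    simpa using ((hasDerivAt_id z).const_mul c).add_const d
  exact (hnum.div hden hz).congr_deriv (by ring)

lemma deriv_moebius_of_eventually_weight {a b c d : ℂ} (hdet : a * d - b * c = 1) (k : ℤ)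
    {f : ℂ → ℂ} {z : ℂ} (hz : c * z + d ≠ 0)
    (hfz : DifferentiableAt ℂ f z)
    (hfw : DifferentiableAt ℂ f ((a * z + b) / (c * z + d)))
    (hmod : (fun u => f ((a * u + b) / (c * u + d))) =ᶠ[𝓝 z] fun u => (c * u + d) ^ k * f u) :
    deriv f ((a * z + b) / (c * z + d))
      = (c * z + d) ^ (k + 2) * deriv f z + k * c * (c * z + d) ^ (k + 1) * f z := by
  have hden : HasDerivAt (fun u => c * u + d) c z := by
    simpa using ((hasDerivAt_id z).const_mul c).add_const d
  have hlhs : HasDerivAt (fun u => f ((a * u + b) / (c * u + d)))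
      (deriv f ((a * z + b) / (c * z + d)) * ((c * z + d) ^ 2)⁻¹) z := by
    simpa [hdet, Function.comp_def] using hfw.hasDerivAt.comp z (hasDerivAt_moebius a b c d hz)
  have hrhs : HasDerivAt (fun u => (c * u + d) ^ k * f u)
      (k * (c * z + d) ^ (k - 1) * c * f z + (c * z + d) ^ k * deriv f z) z := by
    have hpow := (hasDerivAt_zpow k _ (Or.inl hz)).comp z hden
    exact hpow.mul hfz.hasDerivAt
  have hderiv := (hlhs.congr_of_eventuallyEq hmod.symm).unique hrhs
  generalize c * z + d = J at hz hderiv ⊢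
  rw [zpow_sub_one₀ hz] at hderiv
  rw [zpow_add₀ hz, zpow_add₀ hz, zpow_one, zpow_two]
  field_simp at hderiv
  linear_combination hderiv

theorem covariant_derivative_weight_raising_general (k : ℤ) (a b c d : ℝ)
    (hdet : a * d - b * c = 1)
    (f G : ℂ → ℂ)
    (hf : ∀ z : ℂ, 0 < z.im → DifferentiableAt ℂ f z)
    (hfmod : ∀ z : ℂ, 0 < z.im →
      f (((a : ℂ) * z + (b : ℂ)) / ((c : ℂ) * z + (d : ℂ)))
        = ((c : ℂ) * z + (d : ℂ)) ^ k * f z)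
    (hGmod : ∀ z : ℂ, 0 < z.im →
      G (((a : ℂ) * z + (b : ℂ)) / ((c : ℂ) * z + (d : ℂ)))
        = ((c : ℂ) * z + (d : ℂ)) ^ 2 * G z
            + 2 * (c : ℂ) * ((c : ℂ) * z + (d : ℂ)))
    (nf : ℂ → ℂ)
    (hnf : ∀ z : ℂ, nf z = deriv f z - ((k : ℂ) / 2) * G z * f z) :
    ∀ z : ℂ, 0 < z.im →
      nf (((a : ℂ) * z + (b : ℂ)) / ((c : ℂ) * z + (d : ℂ)))
        = ((c : ℂ) * z + (d : ℂ)) ^ (k + 2) * nf z := by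
  intro z hz
  have hcd : c ≠ 0 ∨ d ≠ 0 := by
    by_contra! h
    simp [h.1, h.2] at hdet
  have hJ := ofReal_mul_add_ofReal_ne_zero hcd hz
  have hw : 0 < (((a : ℂ) * z + b) / ((c : ℂ) * z + d)).im := by
    rw [im_moebius, hdet, one_mul]
    exact div_pos hz (Complex.normSq_pos.mpr hJ)
  have hmod : (fun u => f (((a : ℂ) * u + b) / ((c : ℂ) * u + d)))
      =ᶠ[𝓝 z] fun u => ((c : ℂ) * u + d) ^ k * f u :=
    eventually_of_mem ((isOpen_lt continuous_const Complex.continuous_im).mem_nhds hz) hfmod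
  have hderiv := deriv_moebius_of_eventually_weight (by exact_mod_cast hdet) k hJ
    (hf z hz) (hf _ hw) hmod
  rw [hnf, hnf, hderiv, hfmod z hz, hGmod z hz, zpow_add₀ hJ, zpow_add₀ hJ, zpow_one, zpow_two]
  ring

/-- the covariant derivative `∇f = f' - (k/2) G f` attached to a
modular connection `G` transforms with weight `k + 2`. -/
theorem covariant_derivative_weight_raising (k : ℤ) (a b c d : ℝ)
    (hdet : a * d - b * c = 1)
    (f G : ℂ → ℂ)
    (hf : ∀ z : ℂ, 0 < z.im → DifferentiableAt ℂ f z)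
    (hG : ∀ z : ℂ, 0 < z.im → DifferentiableAt ℂ G z)
    (hfmod : ∀ z : ℂ, 0 < z.im →
      f (((a : ℂ) * z + (b : ℂ)) / ((c : ℂ) * z + (d : ℂ)))
        = ((c : ℂ) * z + (d : ℂ)) ^ k * f z)
    (hGmod : ∀ z : ℂ, 0 < z.im →
      G (((a : ℂ) * z + (b : ℂ)) / ((c : ℂ) * z + (d : ℂ)))
        = ((c : ℂ) * z + (d : ℂ)) ^ 2 * G z
            + 2 * (c : ℂ) * ((c : ℂ) * z + (d : ℂ)))
    (nf : ℂ → ℂ)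
    (hnf : ∀ z : ℂ, nf z = deriv f z - ((k : ℂ) / 2) * G z * f z) :
    ∀ z : ℂ, 0 < z.im →
      nf (((a : ℂ) * z + (b : ℂ)) / ((c : ℂ) * z + (d : ℂ)))
        = ((c : ℂ) * z + (d : ℂ)) ^ (k + 2) * nf z :=
  covariant_derivative_weight_raising_general k a b c d hdet f G hf hfmod hGmod nf hnf
end

section
/- Let A be a unital associative (not necessarily commutative) ℂ-algebra, let g ≥ 1, let M be a g×g matrix with complex entries, and let X_1, ..., X_g be symmetric g×g matrices with entries in A. Define the ordered mixed determinant ODet(X_1, ..., X_g) := (1/g!) • Σ_{σ, τ ∈ S_g} sgn(σ) sgn(τ) (X_1)_{σ(1),τ(1)} * (X_2)_{σ(2),τ(2)} * ... * (X_g)_{σ(g),τ(g)}, where the product is taken in increasing order of the index i and the sum ranges over all pairs of permutations of {1,...,g}. Then ODet(M X_1 Mᵀ, ..., M X_g Mᵀ) = det(M)^2 • ODet(X_1, ..., X_g), where M X Mᵀ is formed using the scalar action of the entries of M on A (so (M X Mᵀ)_{a,b} = Σ_{p,q} M_{a,p} M_{b,q} • X_{p,q}). -/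
open scoped BigOperators

/-- Ordered mixed determinant of a `g`-tuple of `g × g` matrices with entries in
a noncommutative `ℂ`-algebra `A`, the products being taken in increasing order
of the index. -/
noncomputable def ODet {A : Type*} [Ring A] [Algebra ℂ A] (g : ℕ)
    (X : Fin g → Matrix (Fin g) (Fin g) A) : A :=
  ((g.factorial : ℂ)⁻¹) •
    ∑ σ : Equiv.Perm (Fin g), ∑ τ : Equiv.Perm (Fin g),
      (((Equiv.Perm.sign σ : ℤ) * (Equiv.Perm.sign τ : ℤ)) •
        ((List.finRange g).map (fun i => X i (σ i) (τ i))).prod)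

/-!
Expanding every entry of `M Xᵢ Mᵀ` and using multilinearity of the ordered product, the sum over
`σ, τ` collapses column by column into `∑ u v, det M[·, u] * det M[·, v] • P(u, v)`, where `P(u, v)`
is the product of the entries `(Xᵢ)_{u i, v i}`. Minors with a repeated column vanish, and
`det M[·, σ] = sgn σ * det M` for a permutation `σ`; hence each of the two sums contributes one
factor `det M`.
-/

section

open Equiv Finset

variable {ι R A B : Type*} [Fintype ι] [DecidableEq ι] [CommRing R]

namespace Matrix

theorem det_submatrix_eq_zero_of_not_injective (M : Matrix ι ι R) {u : ι → ι}
    (hu : ¬ Function.Injective u) : (M.submatrix id u).det = 0 := by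
  obtain ⟨a, b, hab, hne⟩ := Function.not_injective_iff.mp hu
  exact det_zero_of_column_eq hne fun k => by simp [hab]

theorem sum_det_submatrix_smul [AddCommGroup B] [Module R B] (M : Matrix ι ι R)
    (F : (ι → ι) → B) :
    ∑ u : ι → ι, (M.submatrix id u).det • F u = M.det • ∑ σ : Perm ι, (Perm.sign σ : ℤ) • F σ := by
  rw [smul_sum]
  refine (Fintype.sum_of_injective (fun σ : Perm ι => ⇑σ) DFunLike.coe_injective _ _
    (fun u hu => ?_) (fun σ => ?_)).symm
  · have hu : ¬ Function.Injective u := fun hinj =>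
      hu ⟨Equiv.ofBijective u (Finite.injective_iff_bijective.mp hinj), rfl⟩
    rw [det_submatrix_eq_zero_of_not_injective M hu, zero_smul]
  · rw [det_permute', mul_comm, mul_smul, Int.cast_smul_eq_zsmul]

end Matrix

namespace MultilinearMap

variable [AddCommMonoid A] [Module R A] [AddCommGroup B] [Module R B]

def mixedDet (f : MultilinearMap R (fun _ : ι => A) B) (Y : ι → Matrix ι ι A) : B :=
  ∑ σ : Perm ι, ∑ τ : Perm ι, ((Perm.sign σ : ℤ) * (Perm.sign τ : ℤ)) • f fun i => Y i (σ i) (τ i)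

theorem map_sum_sum_mul_smul (f : MultilinearMap R (fun _ : ι => A) B) (c d : ι → ι → R)
    (Y : ι → Matrix ι ι A) :
    (f fun i => ∑ p, ∑ q, (c i p * d i q) • Y i p q)
      = ∑ u : ι → ι, ∑ v : ι → ι,
          ((∏ i, c i (u i)) * ∏ i, d i (v i)) • f fun i => Y i (u i) (v i) := by
  rw [f.map_sum]
  refine sum_congr rfl fun u _ => ?_
  rw [f.map_sum]
  refine sum_congr rfl fun v _ => ?_
  rw [f.map_smul_univ, prod_mul_distrib]

theorem mixedDet_congruence (f : MultilinearMap R (fun _ : ι => A) B) (M : Matrix ι ι R)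
    (Y : ι → Matrix ι ι A) :
    f.mixedDet (fun i => Matrix.of fun p q => ∑ p', ∑ q', (M p p' * M q q') • Y i p' q')
      = M.det ^ 2 • f.mixedDet Y := by
  set P : (ι → ι) → (ι → ι) → B := fun u v => f fun i => Y i (u i) (v i)
  have hminor : ∀ u : ι → ι,
      (M.submatrix id u).det = ∑ σ : Perm ι, ((Perm.sign σ : ℤ) : R) * ∏ i, M (σ i) (u i) :=
    fun u => by rw [Matrix.det_apply']; rfl
  calc f.mixedDet (fun i => Matrix.of fun p q => ∑ p', ∑ q', (M p p' * M q q') • Y i p' q')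
      = ∑ u : ι → ι, ∑ v : ι → ι, ((M.submatrix id u).det * (M.submatrix id v).det) • P u v := by
        simp only [mixedDet, Matrix.of_apply, map_sum_sum_mul_smul, hminor, sum_mul_sum, sum_smul,
          smul_sum]
        simp only [← Fintype.sum_prod_type']
        refine Fintype.sum_equiv (((prodAssoc _ _ _).symm.trans (prodComm _ _)).trans
          (prodAssoc _ _ _)) _ _ fun ⟨σ, τ, u, v⟩ => ?_
        simp only [trans_apply, prodAssoc_symm_apply, prodComm_apply, Prod.swap_prod_mk,
          prodAssoc_apply, P]
        rw [← Int.cast_smul_eq_zsmul R, smul_smul]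
        congr 1
        push_cast
        ring
    _ = M.det • ∑ σ : Perm ι,
          (Perm.sign σ : ℤ) • M.det • ∑ τ : Perm ι, (Perm.sign τ : ℤ) • P σ τ := by
        simp only [mul_smul, ← smul_sum, M.sum_det_submatrix_smul]
    _ = M.det ^ 2 • f.mixedDet Y := by
        simp only [mixedDet, pow_two, mul_smul, smul_comm _ M.det, smul_sum, P]

end MultilinearMap

end

theorem ODet_eq_smul_mixedDet {A : Type*} [Ring A] [Algebra ℂ A] (g : ℕ)
    (X : Fin g → Matrix (Fin g) (Fin g) A) :
    ODet g X = (g.factorial : ℂ)⁻¹ • (MultilinearMap.mkPiAlgebraFin ℂ g A).mixedDet X := by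
  simp only [ODet, MultilinearMap.mixedDet, MultilinearMap.mkPiAlgebraFin_apply, List.ofFn_eq_map]

theorem ODet_covariance_general {A : Type*} [Ring A] [Algebra ℂ A]
    (g : ℕ)
    (M : Matrix (Fin g) (Fin g) ℂ)
    (X : Fin g → Matrix (Fin g) (Fin g) A) :
    ODet g (fun i => Matrix.of fun p q => ∑ p', ∑ q', (M p p' * M q q') • X i p' q')
      = (M.det ^ 2) • ODet g X := by
  rw [ODet_eq_smul_mixedDet, ODet_eq_smul_mixedDet, MultilinearMap.mixedDet_congruence, smul_comm]

/-- covariance of the ordered mixed determinant,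
`ODet (M X₁ Mᵀ, …, M X_g Mᵀ) = det(M)² • ODet (X₁, …, X_g)`. -/
theorem ODet_covariance {A : Type*} [Ring A] [Algebra ℂ A]
    (g : ℕ) (hg : 1 ≤ g)
    (M : Matrix (Fin g) (Fin g) ℂ)
    (X : Fin g → Matrix (Fin g) (Fin g) A)
    (hsymm : ∀ (i : Fin g) (p q : Fin g), X i p q = X i q p) :
    ODet g (fun i => Matrix.of fun p q => ∑ p', ∑ q', (M p p' * M q q') • X i p' q')
      = (M.det ^ 2) • ODet g X :=
  ODet_covariance_general g M X
end

section
/- Let g ≥ 1 and let A, B, C, D be g×g real matrices satisfying the symplectic relations Aᵀ*C = Cᵀ*A, Bᵀ*D = Dᵀ*B, and Aᵀ*D − Cᵀ*B = I. Regard A, B, C, D as complex matrices, and let Z be a symmetric g×g complex matrix such that J := C*Z + D is invertible. Then the map φ(W) := (A*W + B)*(C*W + D)⁻¹ on g×g complex matrices is differentiable at Z, and its Fréchet derivative at Z is the linear map H ↦ (Jᵀ)⁻¹ * H * J⁻¹. -/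
/-!
The product rule and `d(X⁻¹) = -X⁻¹ dX X⁻¹` give the derivative `H ↦ (A - φ(Z) C) H J⁻¹` for any
linear fractional map. The symplectic relations and `Zᵀ = Z` make `φ(Z) = (AZ + B) J⁻¹`
symmetric, i.e. `Jᵀ (AZ + B) = (AZ + B)ᵀ J`, and with this
`Jᵀ (A - φ(Z) C) = Z (CᵀA - AᵀC) + (DᵀA - BᵀC) = 1`, so `A - φ(Z) C = (Jᵀ)⁻¹`.
-/

open Matrix

attribute [local instance]
  Matrix.linftyOpNormedAddCommGroup Matrix.linftyOpNormedRing
  Matrix.linftyOpNormedAlgebra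

theorem hasFDerivAt_mul_ringInverse_affine {𝕜 R : Type*} [NontriviallyNormedField 𝕜]
    [NormedRing R] [NormedAlgebra 𝕜 R] [CompleteSpace R] {a b c d z : R}
    (hz : IsUnit (c * z + d)) :
    HasFDerivAt (fun w => (a * w + b) * Ring.inverse (c * w + d))
      (ContinuousLinearMap.mulLeftRight 𝕜 R (a - (a * z + b) * Ring.inverse (c * z + d) * c)
        (Ring.inverse (c * z + d))) z := by
  obtain ⟨u, hu⟩ := hz
  have hinv : HasFDerivAt Ring.inverse
      (-ContinuousLinearMap.mulLeftRight 𝕜 R (Ring.inverse (c * z + d))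
        (Ring.inverse (c * z + d))) (c * z + d) := by
    simpa only [← hu, Ring.inverse_unit] using hasFDerivAt_ringInverse (𝕜 := 𝕜) u
  have hnum := ((ContinuousLinearMap.mul 𝕜 R a).hasFDerivAt (x := z)).add_const b
  have hden := ((ContinuousLinearMap.mul 𝕜 R c).hasFDerivAt (x := z)).add_const d
  refine (hnum.mul' (hinv.comp z hden)).congr_fderiv ?_
  ext h
  simp only [ContinuousLinearMap.mul_apply', ContinuousLinearMap.neg_comp, smul_neg,
    Function.comp_apply, _root_.add_apply, _root_.neg_apply, _root_.smul_apply,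
    ContinuousLinearMap.comp_apply, ContinuousLinearMap.mulLeftRight_apply, smul_eq_mul,
    MulOpposite.smul_eq_mul_unop, MulOpposite.unop_op, map_sub, _root_.sub_apply]
  noncomm_ring

namespace Matrix

variable {n R : Type*} [Fintype n] [DecidableEq n] [CommRing R] {A B C D Z : Matrix n n R}

theorem transpose_mul_sub_transpose_mul_eq_one (h : Aᵀ * D - Cᵀ * B = 1) :
    Dᵀ * A - Bᵀ * C = 1 := by
  simpa only [transpose_sub, transpose_mul, transpose_transpose, transpose_one]
    using congrArg transpose h

theorem transpose_mul_eq_transpose_mul_of_symplectic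
    (hAC : Aᵀ * C = Cᵀ * A) (hBD : Bᵀ * D = Dᵀ * B) (hAD : Aᵀ * D - Cᵀ * B = 1) (hZ : Zᵀ = Z) :
    (C * Z + D)ᵀ * (A * Z + B) = (A * Z + B)ᵀ * (C * Z + D) := by
  rw [← sub_eq_zero]
  calc (C * Z + D)ᵀ * (A * Z + B) - (A * Z + B)ᵀ * (C * Z + D)
      = Z * (Cᵀ * A - Aᵀ * C) * Z - Z * (Aᵀ * D - Cᵀ * B) + (Dᵀ * A - Bᵀ * C) * Z
          + (Dᵀ * B - Bᵀ * D) := by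
        simp only [transpose_add, transpose_mul, hZ]; noncomm_ring
    _ = 0 := by
        rw [hAC, hBD, hAD, transpose_mul_sub_transpose_mul_eq_one hAD]; noncomm_ring

theorem inv_transpose_eq_of_symplectic
    (hAC : Aᵀ * C = Cᵀ * A) (hBD : Bᵀ * D = Dᵀ * B) (hAD : Aᵀ * D - Cᵀ * B = 1) (hZ : Zᵀ = Z)
    (hJ : IsUnit (C * Z + D)) :
    ((C * Z + D)ᵀ)⁻¹ = A - (A * Z + B) * (C * Z + D)⁻¹ * C := by
  refine inv_eq_right_inv ?_
  calc (C * Z + D)ᵀ * (A - (A * Z + B) * (C * Z + D)⁻¹ * C)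
      = (C * Z + D)ᵀ * A - (C * Z + D)ᵀ * (A * Z + B) * (C * Z + D)⁻¹ * C := by
        simp only [mul_sub, mul_assoc]
    _ = (C * Z + D)ᵀ * A - (A * Z + B)ᵀ * ((C * Z + D) * (C * Z + D)⁻¹) * C := by
        rw [transpose_mul_eq_transpose_mul_of_symplectic hAC hBD hAD hZ]; simp only [mul_assoc]
    _ = (C * Z + D)ᵀ * A - (A * Z + B)ᵀ * C := by
        rw [mul_nonsing_inv _ ((isUnit_iff_isUnit_det _).1 hJ), mul_one]
    _ = Z * (Cᵀ * A - Aᵀ * C) + (Dᵀ * A - Bᵀ * C) := by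
        simp only [transpose_add, transpose_mul, hZ]; noncomm_ring
    _ = 1 := by rw [hAC, transpose_mul_sub_transpose_mul_eq_one hAD]; noncomm_ring

end Matrix

theorem siegel_action_hasFDerivAt_general (g : ℕ)
    (A B C D : Matrix (Fin g) (Fin g) ℝ)
    (h1 : Aᵀ * C = Cᵀ * A) (h2 : Bᵀ * D = Dᵀ * B)
    (h3 : Aᵀ * D - Cᵀ * B = 1)
    (Z : Matrix (Fin g) (Fin g) ℂ) (hZ : Zᵀ = Z)
    (hJ : IsUnit (C.map Complex.ofReal * Z + D.map Complex.ofReal)) :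
    HasFDerivAt
      (fun W : Matrix (Fin g) (Fin g) ℂ =>
        (A.map Complex.ofReal * W + B.map Complex.ofReal) *
          (C.map Complex.ofReal * W + D.map Complex.ofReal)⁻¹)
      (LinearMap.toContinuousLinearMap
        ((LinearMap.mulLeft ℂ
            (((C.map Complex.ofReal * Z + D.map Complex.ofReal)ᵀ)⁻¹)).comp
          (LinearMap.mulRight ℂ
            ((C.map Complex.ofReal * Z + D.map Complex.ofReal)⁻¹))))
      Z := by
  have hofReal : ⇑Complex.ofRealHom = Complex.ofReal := rfl
  have h1' := congrArg Complex.ofRealHom.mapMatrix h1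
  have h2' := congrArg Complex.ofRealHom.mapMatrix h2
  have h3' := congrArg Complex.ofRealHom.mapMatrix h3
  simp only [map_sub, _root_.map_one, RingHom.mapMatrix_apply, Matrix.map_mul, transpose_map]
    at h1' h2' h3'
  simp only [hofReal] at h1' h2' h3'
  simp only [nonsing_inv_eq_ringInverse]
  refine (hasFDerivAt_mul_ringInverse_affine hJ).congr_fderiv (ContinuousLinearMap.ext fun H => ?_)
  simp only [← nonsing_inv_eq_ringInverse, inv_transpose_eq_of_symplectic h1' h2' h3' hZ hJ]
  exact mul_assoc _ _ _

/-- the Fréchet derivative of the Siegel action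
`W ↦ (AW + B)(CW + D)⁻¹` at a symmetric `Z` with `J = CZ + D` invertible is
`H ↦ (Jᵀ)⁻¹ H J⁻¹`. -/
theorem siegel_action_hasFDerivAt (g : ℕ) (hg : 1 ≤ g)
    (A B C D : Matrix (Fin g) (Fin g) ℝ)
    (h1 : Aᵀ * C = Cᵀ * A) (h2 : Bᵀ * D = Dᵀ * B)
    (h3 : Aᵀ * D - Cᵀ * B = 1)
    (Z : Matrix (Fin g) (Fin g) ℂ) (hZ : Zᵀ = Z)
    (hJ : IsUnit (C.map Complex.ofReal * Z + D.map Complex.ofReal)) :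
    HasFDerivAt
      (fun W : Matrix (Fin g) (Fin g) ℂ =>
        (A.map Complex.ofReal * W + B.map Complex.ofReal) *
          (C.map Complex.ofReal * W + D.map Complex.ofReal)⁻¹)
      (LinearMap.toContinuousLinearMap
        ((LinearMap.mulLeft ℂ
            (((C.map Complex.ofReal * Z + D.map Complex.ofReal)ᵀ)⁻¹)).comp
          (LinearMap.mulRight ℂ
            ((C.map Complex.ofReal * Z + D.map Complex.ofReal)⁻¹))))
      Z :=
  siegel_action_hasFDerivAt_general g A B C D h1 h2 h3 Z hZ hJ
end
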